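/- Let n ≥ 1 and let f : ℝⁿ → [0,∞) be a measurable function with ∫_{ℝⁿ} f(x) dx = 1 such that x ↦ f(x) log f(x) is integrable. Fix ω ∈ ℝⁿ and set θ² := ∫_{ℝⁿ} |x − ω|² f(x) dx, assumed finite. Then for every t > 0, exp( −(1/n) ∫_{ℝⁿ} f log f dx ) ≤ √(πe/t) · ( t + θ²/(2n) ). -/

import Mathlib

/-!
Gibbs' inequality against the Gaussian `x ↦ exp (-‖x - ω‖² / (2s))`, of total mass
`(2πs)^(n/2)`, bounds the entropy by the second moment: `-∫ f log f ≤ θ²/(2s) + (n/2) log (2πs)`,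
i.e. `U_n(f) ≤ √(2πs) exp (θ²/(2ns))` for every `s > 0`. The choice `s = t + θ²/(2n)` turns the
right-hand side into at most `√(πe/t) s`, which after squaring is the elementary `eᵘ (1 - u) ≤ 1`
for `u = (θ²/(2n) - t)/s`.
-/

open MeasureTheory Real

section Gibbs

variable {α : Type*} [MeasurableSpace α] {μ : Measure α}

lemma mul_log_le_mul_log_add_sub {y c : ℝ} (hy : 0 ≤ y) (hc : 0 < c) :
    y * log c ≤ y * log y + c - y := by
  rcases hy.eq_or_lt with rfl | hy
  · simp [hc.le]
  · have h := mul_le_mul_of_nonneg_left (log_le_sub_one_of_pos (div_pos hc hy)) hy.le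
    rw [log_div hc.ne' hy.ne', mul_sub, mul_sub, mul_div_cancel₀ _ hy.ne'] at h
    linarith

theorem integral_mul_log_le_integral_mul_log {f g : α → ℝ} (hf : 0 ≤ f) (hg : ∀ x, 0 < g x)
    (hf_int : Integrable f μ) (hg_int : Integrable g μ)
    (hfg : Integrable (fun x ↦ f x * log (g x)) μ)
    (hff : Integrable (fun x ↦ f x * log (f x)) μ) :
    ∫ x, f x * log (g x) ∂μ ≤ ∫ x, f x * log (f x) ∂μ + ∫ x, g x ∂μ - ∫ x, f x ∂μ := by
  calc ∫ x, f x * log (g x) ∂μ ≤ ∫ x, (f x * log (f x) + g x - f x) ∂μ :=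
        integral_mono hfg ((hff.add hg_int).sub hf_int) fun x ↦
          mul_log_le_mul_log_add_sub (hf x) (hg x)
    _ = _ := by rw [integral_sub (by exact hff.add hg_int) hf_int, integral_add hff hg_int]

end Gibbs

section Gaussian

variable {V : Type*} [NormedAddCommGroup V] [InnerProductSpace ℝ V] [FiniteDimensional ℝ V]
  [MeasurableSpace V] [BorelSpace V]

theorem integral_exp_neg_mul_norm_sub_sq {b : ℝ} (hb : 0 < b) (ω : V) :
    ∫ x : V, exp (-b * ‖x - ω‖ ^ 2) = (π / b) ^ (Module.finrank ℝ V / 2 : ℝ) := by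
  rw [integral_sub_right_eq_self (fun x ↦ exp (-b * ‖x‖ ^ 2)) ω,
    GaussianFourier.integral_rexp_neg_mul_sq_norm hb]

theorem integrable_exp_neg_mul_norm_sub_sq {b : ℝ} (hb : 0 < b) (ω : V) :
    Integrable fun x : V ↦ exp (-b * ‖x - ω‖ ^ 2) :=
  -- a non-integrable function has Bochner integral `0`
  Integrable.of_integral_ne_zero <| by
    rw [integral_exp_neg_mul_norm_sub_sq hb]
    positivity

theorem neg_integral_mul_log_le_of_second_moment {f : V → ℝ} (hf : 0 ≤ f) (hf_int : Integrable f)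
    (hf_one : ∫ x, f x = 1) (hlog : Integrable fun x ↦ f x * log (f x)) (ω : V)
    (hθ : Integrable fun x ↦ ‖x - ω‖ ^ 2 * f x) {s : ℝ} (hs : 0 < s) :
    -∫ x, f x * log (f x) ≤
      (∫ x, ‖x - ω‖ ^ 2 * f x) / (2 * s) + Module.finrank ℝ V / 2 * log (2 * π * s) := by
  set b : ℝ := (2 * s)⁻¹
  have hb : 0 < b := by positivity
  set C : ℝ := (2 * π * s) ^ (Module.finrank ℝ V / 2 : ℝ)
  have hC : 0 < C := by positivity
  have hgauss_one : ∫ x, exp (-b * ‖x - ω‖ ^ 2) / C = 1 := by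
    rw [integral_div, integral_exp_neg_mul_norm_sub_sq hb,
      show π / b = 2 * π * s by rw [div_inv_eq_mul]; ring, div_self hC.ne']
  have hlog_gauss : ∀ x, f x * log (exp (-b * ‖x - ω‖ ^ 2) / C) =
      -b * (‖x - ω‖ ^ 2 * f x) - log C * f x := fun x ↦ by
    rw [log_div (exp_pos _).ne' hC.ne', log_exp]
    ring
  have gibbs := integral_mul_log_le_integral_mul_log hf (fun x ↦ by positivity) hf_int
    ((integrable_exp_neg_mul_norm_sub_sq hb ω).div_const C)
    (by simp_rw [hlog_gauss]; exact (hθ.const_mul _).sub (hf_int.const_mul _)) hlog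
  simp only [hlog_gauss, hgauss_one, hf_one] at gibbs
  rw [integral_sub (hθ.const_mul _) (hf_int.const_mul _), integral_const_mul, integral_const_mul,
    hf_one, log_rpow (by positivity)] at gibbs
  have : b * ∫ x, ‖x - ω‖ ^ 2 * f x = (∫ x, ‖x - ω‖ ^ 2 * f x) / (2 * s) := by ring
  linarith

end Gaussian

lemma exp_div_mul_sqrt_le {t a : ℝ} (ht : 0 < t) (ha : 0 ≤ a) :
    exp (a / (t + a)) * √(2 * π * (t + a)) ≤ √(π * exp 1 / t) * (t + a) := by
  set s := t + a
  have hs : 0 < s := by positivity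
  set u := (a - t) / s
  have h1u : 1 - u = 2 * t / s := by simp only [u, s]; field_simp; ring
  have hexp : exp (a / s) ^ 2 = exp 1 * exp u := by
    rw [← exp_add, ← exp_nat_mul]
    congr 1
    simp only [u, s]
    field_simp
    ring
  have key : exp u * (1 - u) ≤ 1 := by
    have := mul_le_mul_of_nonneg_left (one_sub_le_exp_neg u) (exp_pos u).le
    rwa [← exp_add, add_neg_cancel, exp_zero] at this
  refine le_of_pow_le_pow_left₀ two_ne_zero (by positivity) ?_
  rw [mul_pow, mul_pow, sq_sqrt (by positivity), sq_sqrt (by positivity), hexp]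
  calc exp 1 * exp u * (2 * π * s) = π * exp 1 / t * s ^ 2 * (exp u * (1 - u)) := by
        rw [h1u]; field_simp
    _ ≤ π * exp 1 / t * s ^ 2 := mul_le_of_le_one_right (by positivity) key

theorem evi_intermediate_inequality_Rn_general (n : ℕ) (hn : 1 ≤ n)
    (f : EuclideanSpace ℝ (Fin n) → ℝ)
    (hf_nonneg : ∀ x, 0 ≤ f x)
    (hf_int : Integrable f) (hf_one : ∫ x, f x = 1)
    (hlog : Integrable (fun x => f x * Real.log (f x)))
    (ω : EuclideanSpace ℝ (Fin n))
    (hθ : Integrable (fun x => ‖x - ω‖ ^ 2 * f x))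
    (t : ℝ) (ht : 0 < t) :
    Real.exp (-(1 / n : ℝ) * ∫ x, f x * Real.log (f x)) ≤
      Real.sqrt (π * Real.exp 1 / t) *
        (t + (∫ x, ‖x - ω‖ ^ 2 * f x) / (2 * n)) := by
  have hn_pos : (0 : ℝ) < n := by exact_mod_cast hn
  set θ2 := ∫ x, ‖x - ω‖ ^ 2 * f x with hθ2
  have ha : 0 ≤ θ2 / (2 * n) :=
    div_nonneg (integral_nonneg fun x ↦ mul_nonneg (sq_nonneg _) (hf_nonneg x)) (by positivity)
  set s := t + θ2 / (2 * n)
  have hs : 0 < s := by positivity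
  have hentropy := neg_integral_mul_log_le_of_second_moment hf_nonneg hf_int hf_one hlog ω hθ hs
  rw [finrank_euclideanSpace_fin, ← hθ2] at hentropy
  calc exp (-(1 / n : ℝ) * ∫ x, f x * log (f x))
      ≤ exp (θ2 / (2 * n) / s + log (2 * π * s) / 2) := by
        gcongr
        have h := mul_le_mul_of_nonneg_left hentropy (by positivity : (0 : ℝ) ≤ 1 / n)
        convert h using 1
        · ring
        · field_simp
    _ = exp (θ2 / (2 * n) / s) * √(2 * π * s) := by
        rw [exp_add, sqrt_eq_rpow, rpow_def_of_pos (by positivity), mul_one_div]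
    _ ≤ _ := exp_div_mul_sqrt_le ht ha

/-- **Key intermediate inequality in the proof of Shannon's inequality on ℝⁿ.** For a
probability density `f` with integrable entropy integrand and finite second moment
`θ² = ∫ |x-ω|² f(x) dx` about a point `ω`, for every `t > 0` one has
`exp(-(1/n) ∫ f log f) ≤ √(πe/t) (t + θ²/(2n))`. -/
theorem evi_intermediate_inequality_Rn (n : ℕ) (hn : 1 ≤ n)
    (f : EuclideanSpace ℝ (Fin n) → ℝ)
    (hf_meas : Measurable f) (hf_nonneg : ∀ x, 0 ≤ f x)
    (hf_int : Integrable f) (hf_one : ∫ x, f x = 1)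
    (hlog : Integrable (fun x => f x * Real.log (f x)))
    (ω : EuclideanSpace ℝ (Fin n))
    (hθ : Integrable (fun x => ‖x - ω‖ ^ 2 * f x))
    (t : ℝ) (ht : 0 < t) :
    Real.exp (-(1 / n : ℝ) * ∫ x, f x * Real.log (f x)) ≤
      Real.sqrt (π * Real.exp 1 / t) *
        (t + (∫ x, ‖x - ω‖ ^ 2 * f x) / (2 * n)) :=
  evi_intermediate_inequality_Rn_general n hn f hf_nonneg hf_int hf_one hlog ω hθ t ht
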